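/- If Y is an infinite discrete subspace of a Tychonoff space X, then 2^(2^|Y|) ≤ |𝒰_X|. In particular, for every infinite Tychonoff space X, 2^𝔠 ≤ |𝒰_X|. -/

import Mathlib

open Set TopologicalSpace

/-- The basic set `V(f,A,ε)` of functions uniformly `ε`-close to `f` on `A`. -/
def Vset {X : Type*} [TopologicalSpace X] (f : C(X, ℝ)) (A : Set X) (ε : ℝ) : Set C(X, ℝ) :=
  {g | ∀ x ∈ A, |f x - g x| < ε}

/-- A nonempty directed family of subsets of `X`. -/
structure DirFam (X : Type*) where
  sets : Set (Set X)
  nonempty : sets.Nonempty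
  directed : ∀ A ∈ sets, ∀ B ∈ sets, ∃ E ∈ sets, A ∪ B ⊆ E

/-- The uniform topology `C_γ` on `C(X)` determined by a directed family `γ`. -/
def DirFam.top {X : Type*} [TopologicalSpace X] (γ : DirFam X) : TopologicalSpace C(X, ℝ) where
  IsOpen U := ∀ f ∈ U, ∃ A ∈ γ.sets, ∃ ε > 0, Vset f A ε ⊆ U
  isOpen_univ := by
    intro f _
    obtain ⟨A, hA⟩ := γ.nonempty
    exact ⟨A, hA, 1, one_pos, Set.subset_univ _⟩
  isOpen_inter := by
    intro U W hU hW f hf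
    obtain ⟨A, hA, ε, hε, hAU⟩ := hU f hf.1
    obtain ⟨B, hB, δ, hδ, hBW⟩ := hW f hf.2
    obtain ⟨E, hE, hsub⟩ := γ.directed A hA B hB
    refine ⟨E, hE, min ε δ, lt_min hε hδ, fun g hg => ⟨?_, ?_⟩⟩
    · exact hAU fun x hx =>
        lt_of_lt_of_le (hg x (hsub (Set.mem_union_left _ hx))) (min_le_left _ _)
    · exact hBW fun x hx =>
        lt_of_lt_of_le (hg x (hsub (Set.mem_union_right _ hx))) (min_le_right _ _)
  isOpen_sUnion := by
    intro S hS f hf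
    obtain ⟨U, hU, hfU⟩ := hf
    obtain ⟨A, hA, ε, hε, h⟩ := hS U hU f hfU
    exact ⟨A, hA, ε, hε, h.trans (Set.subset_sUnion_of_mem hU)⟩

/-- The lattice of uniform topologies on `C(X)`. -/
def UX (X : Type*) [TopologicalSpace X] : Set (TopologicalSpace C(X, ℝ)) :=
  {t | ∃ γ : DirFam X, t = γ.top}

/-- `tle s t` means the topology `s` is coarser than or equal to `t`
(inclusion of topologies, `τ_s ⊆ τ_t`). -/
def tle {X : Type*} [TopologicalSpace X] (s t : TopologicalSpace C(X, ℝ)) : Prop :=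
  ∀ U : Set C(X, ℝ), s.IsOpen U → t.IsOpen U

/-- The directed family `{∅}`, generating the indiscrete topology `C_∅`. -/
def cEmptyFam (X : Type*) : DirFam X :=
  ⟨{∅}, Set.singleton_nonempty _, by
    intro A hA B hB
    rw [Set.mem_singleton_iff] at hA hB
    exact ⟨∅, Set.mem_singleton _, by simp [hA, hB]⟩⟩

/-- The directed family `{X}`, generating the uniform-convergence topology `C_u`. -/
def cUnivFam (X : Type*) : DirFam X :=
  ⟨{Set.univ}, Set.singleton_nonempty _, fun A _ B _ =>
    ⟨Set.univ, Set.mem_singleton _, Set.subset_univ _⟩⟩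

/-- The directed family `{{x}}`. -/
def ptFam {X : Type*} (x : X) : DirFam X :=
  ⟨{{x}}, Set.singleton_nonempty _, by
    intro A hA B hB
    rw [Set.mem_singleton_iff] at hA hB
    exact ⟨{x}, Set.mem_singleton _, by simp [hA, hB]⟩⟩

/-- The directed family `{A}`. -/
def setFam {X : Type*} (A : Set X) : DirFam X :=
  ⟨{A}, Set.singleton_nonempty _, by
    intro B hB E hE
    rw [Set.mem_singleton_iff] at hB hE
    exact ⟨A, Set.mem_singleton _, by simp [hB, hE]⟩⟩

/-- The topology `C_x`. -/
def Cpt {X : Type*} [TopologicalSpace X] (x : X) : TopologicalSpace C(X, ℝ) :=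
  (ptFam x).top

/-- The topology `C_A`. -/
def CSet {X : Type*} [TopologicalSpace X] (A : Set X) : TopologicalSpace C(X, ℝ) :=
  (setFam A).top

/-- The pushforward `f*γ = {f[A] : A ∈ γ}` of a directed family along a map. -/
def DirFam.push {X Y : Type*} (f : X → Y) (γ : DirFam X) : DirFam Y :=
  ⟨(Set.image f) '' γ.sets, γ.nonempty.image _, by
    rintro A ⟨A', hA', rfl⟩ B ⟨B', hB', rfl⟩
    obtain ⟨E, hE, h⟩ := γ.directed A' hA' B' hB'
    exact ⟨f '' E, ⟨E, hE, rfl⟩, by rw [← Set.image_union]; exact fun _ ⟨x, hx, hxy⟩ => ⟨x, h hx, hxy⟩⟩⟩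

universe u

section Aux18

/-! ### Combinatorial part: a weak independent family -/

open Classical in
/-- The intersection of a set with a finset, as a finset. -/
noncomputable def interFS {α : Type*} (A : Set α) (F : Finset α) : Finset α :=
  F.filter (fun a => a ∈ A)

lemma mem_interFS {α : Type*} {A : Set α} {F : Finset α} {a : α} :
    a ∈ interFS A F ↔ a ∈ F ∧ a ∈ A := by
  classical
  simp [interFS]

/-- The (weakly) independent family indexed by sets `A ⊆ α`. -/
def Kset {α : Type*} (A : Set α) : Set (Finset α × Finset (Finset α)) :=
  {p | interFS A p.1 ∈ p.2}

lemma kset_indep {α : Type*} (A : Set α) (s : Finset (Set α)) (hA : A ∉ s) :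
    ¬ Kset A ⊆ ⋃ B ∈ s, Kset B := by
  classical
  have hch : ∀ B ∈ s, ∃ a, (a ∈ A ↔ a ∉ B) := by
    intro B hB
    have hne : A ≠ B := fun h => hA (h ▸ hB)
    by_contra hcon
    push_neg at hcon
    apply hne
    ext a
    have := hcon a
    tauto
  choose g hg using hch
  set F : Finset α := s.attach.image (fun b => g b.1 b.2) with hF
  intro hsub
  have hpA : ((F, ({interFS A F} : Finset (Finset α))) :
      Finset α × Finset (Finset α)) ∈ Kset A := by
    simp [Kset]
  have hmem := hsub hpA
  simp only [Set.mem_iUnion] at hmem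
  obtain ⟨B, hB, hpB⟩ := hmem
  have heq : interFS B F = interFS A F := by
    simpa [Kset] using hpB
  have haF : g B hB ∈ F := by
    rw [hF]
    exact Finset.mem_image.2 ⟨⟨B, hB⟩, Finset.mem_attach _ _, rfl⟩
  have h1 : g B hB ∈ interFS A F ↔ g B hB ∈ interFS B F := by rw [heq]
  rw [mem_interFS, mem_interFS] at h1
  have h2 := hg B hB
  tauto

/-! ### Topological lemmas -/

variable {X : Type u} [TopologicalSpace X]

lemma discrete_trace {Y : Set X} (hd : DiscreteTopology Y) {B : Set X}
    (hBY : B ⊆ Y) {y : X} (hy : y ∈ Y) (hyc : y ∈ closure B) : y ∈ B := by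
  have hopen : IsOpen ({⟨y, hy⟩} : Set Y) := isOpen_discrete _
  rw [isOpen_induced_iff] at hopen
  obtain ⟨U, hU, hUeq⟩ := hopen
  have hyU : y ∈ U := by
    have : (⟨y, hy⟩ : Y) ∈ (Subtype.val ⁻¹' U : Set Y) := by rw [hUeq]; rfl
    exact this
  rcases mem_closure_iff.1 hyc U hU hyU with ⟨z, hzU, hzB⟩
  have hzY : z ∈ Y := hBY hzB
  have hz : (⟨z, hzY⟩ : Y) ∈ (Subtype.val ⁻¹' U : Set Y) := hzU
  rw [hUeq] at hz
  have hzy : z = y := congrArg Subtype.val (Set.mem_singleton_iff.1 hz)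
  exact hzy ▸ hzB

lemma subset_closure_of_vset [CompletelyRegularSpace X] {B B' : Set X} {δ : ℝ}
    (hδ : 0 < δ) (h : Vset (0 : C(X, ℝ)) B' δ ⊆ Vset (0 : C(X, ℝ)) B 1) :
    B ⊆ closure B' := by
  intro x hx
  by_contra hxc
  obtain ⟨f, hf, hf0, hf1⟩ :=
    CompletelyRegularSpace.completely_regular x (closure B') isClosed_closure hxc
  set g : C(X, ℝ) := ⟨fun z => 1 - (f z : ℝ),
    continuous_const.sub (continuous_subtype_val.comp hf)⟩ with hg
  have hgB' : g ∈ Vset (0 : C(X, ℝ)) B' δ := by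
    intro z hz
    have h1 : f z = 1 := hf1 (subset_closure hz)
    simp [hg, h1, hδ]
  have hgB := h hgB' x hx
  have h0 : (f x : ℝ) = 0 := by rw [hf0]; rfl
  simp [hg, h0] at hgB

lemma exists_vset_of_top_eq {γ γ' : DirFam X} (h : γ.top = γ'.top) {B : Set X}
    (hB : B ∈ γ.sets) :
    ∃ B' ∈ γ'.sets, ∃ δ > 0, Vset (0 : C(X, ℝ)) B' δ ⊆ Vset (0 : C(X, ℝ)) B 1 := by
  set O : Set C(X, ℝ) := {g | ∃ ε > 0, ∀ x ∈ B, |g x| < 1 - ε} with hOdef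
  have hO : γ.top.IsOpen O := by
    show ∀ f ∈ O, ∃ A ∈ γ.sets, ∃ ε > 0, Vset f A ε ⊆ O
    intro g hg
    obtain ⟨ε, hε, hgb⟩ := hg
    refine ⟨B, hB, ε / 2, by linarith, ?_⟩
    intro k hk
    refine ⟨ε / 2, by linarith, fun x hxB => ?_⟩
    have h1 := hgb x hxB
    have h2 := hk x hxB
    have h3 : k x = g x - (g x - k x) := by ring
    calc |k x| = |g x - (g x - k x)| := by rw [← h3]
      _ ≤ |g x| + |g x - k x| := abs_sub _ _
      _ < 1 - ε / 2 := by linarith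
  have h0 : (0 : C(X, ℝ)) ∈ O := by
    refine ⟨1 / 2, by norm_num, fun x _ => ?_⟩
    simp
    norm_num
  have hO' : γ'.top.IsOpen O := by rw [← h]; exact hO
  have hO'' : ∀ f ∈ O, ∃ A ∈ γ'.sets, ∃ ε > 0, Vset f A ε ⊆ O := hO'
  obtain ⟨B', hB', δ, hδ, hsub⟩ := hO'' 0 h0
  refine ⟨B', hB', δ, hδ, hsub.trans ?_⟩
  intro g hgO x hxB
  obtain ⟨ε, hε, hgb⟩ := hgO
  have := hgb x hxB
  have h4 : (0 : C(X, ℝ)) x = 0 := rfl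
  rw [h4]
  rw [zero_sub, abs_neg]
  linarith

/-- The directed family (an ideal) generated by the sets `XA A`, `A ∈ T`. -/
def idealFam {X : Type u} (Y : Set X) (XA : Set ↥Y → Set X)
    (T : Set (Set ↥Y)) : DirFam X where
  sets := {B | B ⊆ Y ∧ ∃ s : Finset (Set ↥Y), ↑s ⊆ T ∧ B ⊆ ⋃ A ∈ s, XA A}
  nonempty := ⟨∅, Set.empty_subset _, ∅, by simp, by simp⟩
  directed := by
    classical
    rintro B₁ ⟨hB₁Y, s₁, hs₁, hB₁⟩ B₂ ⟨hB₂Y, s₂, hs₂, hB₂⟩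
    refine ⟨B₁ ∪ B₂, ⟨Set.union_subset hB₁Y hB₂Y, s₁ ∪ s₂, ?_, ?_⟩, subset_rfl⟩
    · rw [Finset.coe_union]; exact Set.union_subset hs₁ hs₂
    · apply Set.union_subset
      · refine hB₁.trans ?_
        intro z hz
        simp only [Set.mem_iUnion] at hz ⊢
        obtain ⟨A, hA, hzA⟩ := hz
        exact ⟨A, Finset.mem_union_left _ hA, hzA⟩
      · refine hB₂.trans ?_
        intro z hz
        simp only [Set.mem_iUnion] at hz ⊢
        obtain ⟨A, hA, hzA⟩ := hz
        exact ⟨A, Finset.mem_union_right _ hA, hzA⟩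

lemma key18 [T2Space X] [CompletelyRegularSpace X]
    (Y : Set X) (hY : Y.Infinite) (hd : DiscreteTopology Y) :
    (2 : Cardinal.{u}) ^ ((2 : Cardinal.{u}) ^ Cardinal.mk ↥Y) ≤ Cardinal.mk ↥(UX X) := by
  haveI : Infinite ↥Y := hY.to_subtype
  obtain ⟨e⟩ : Nonempty ((Finset ↥Y × Finset (Finset ↥Y)) ↪ ↥Y) := by
    rw [← Cardinal.le_def]
    have h1 : (Cardinal.mk (Finset ↥Y × Finset (Finset ↥Y)) : Cardinal.{u})
        = Cardinal.mk ↥Y := by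
      rw [Cardinal.mk_prod, Cardinal.mk_finset_of_infinite, Cardinal.mk_finset_of_infinite,
        Cardinal.mk_finset_of_infinite, Cardinal.lift_id,
        Cardinal.mul_eq_self (Cardinal.aleph0_le_mk _)]
    exact h1.le
  set j : (Finset ↥Y × Finset (Finset ↥Y)) → X := fun p => ↑(e p) with hjdef
  have hj : Function.Injective j := fun p q hpq =>
    e.injective (Subtype.coe_injective hpq)
  set XA : Set ↥Y → Set X := fun A => j '' Kset A with hXAdef
  have hXAY : ∀ A, XA A ⊆ Y := by
    rintro A _ ⟨p, _, rfl⟩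
    exact (e p).2
  have hmono : ∀ T T' : Set (Set ↥Y),
      (idealFam Y XA T).top = (idealFam Y XA T').top → T ⊆ T' := by
    intro T T' htop A hA
    have hBmem : XA A ∈ (idealFam Y XA T).sets := by
      refine ⟨hXAY A, {A}, by simp [hA], by simp⟩
    obtain ⟨B', hB', δ, hδ, hsub⟩ := exists_vset_of_top_eq htop hBmem
    obtain ⟨hB'Y, s', hs', hB's⟩ := hB'
    have hclo : XA A ⊆ closure B' := subset_closure_of_vset hδ hsub
    have hXB' : XA A ⊆ B' := fun z hz => discrete_trace hd hB'Y (hXAY A hz) (hclo hz)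
    have hK : Kset A ⊆ ⋃ B ∈ s', Kset B := by
      intro p hp
      have hm : j p ∈ ⋃ A' ∈ s', XA A' := hB's (hXB' ⟨p, hp, rfl⟩)
      simp only [Set.mem_iUnion] at hm ⊢
      obtain ⟨A', hA', q, hq, hjq⟩ := hm
      exact ⟨A', hA', by rwa [hj hjq] at hq⟩
    by_contra hA'
    exact kset_indep A s' (fun hmem => hA' (hs' hmem)) hK
  have hinj : Function.Injective
      (fun T : Set (Set ↥Y) => (⟨(idealFam Y XA T).top, idealFam Y XA T, rfl⟩ : ↥(UX X))) := by
    intro T T' hTT'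
    have h1 : (idealFam Y XA T).top = (idealFam Y XA T').top := congrArg Subtype.val hTT'
    exact Set.Subset.antisymm (hmono T T' h1) (hmono T' T h1.symm)
  have hle := Cardinal.mk_le_of_injective hinj
  rwa [Cardinal.mk_set, Cardinal.mk_set] at hle

lemma exists_infinite_discrete (X : Type u) [TopologicalSpace X] [T2Space X] [Infinite X] :
    ∃ Y : Set X, Y.Infinite ∧ DiscreteTopology Y := by
  have step : ∀ S : Set X, S.Infinite →
      ∃ x ∈ S, ∃ W : Set X, IsOpen W ∧ x ∈ W ∧ (S \ W).Infinite := by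
    intro S hS
    obtain ⟨a, ha, b, hb, hab⟩ := hS.nontrivial
    obtain ⟨U, V, hU, hV, haU, hbV, hUV⟩ := t2_separation hab
    by_cases hdiff : (S \ U).Infinite
    · exact ⟨a, ha, U, hU, haU, hdiff⟩
    · refine ⟨b, hb, V, hV, hbV, ?_⟩
      rw [Set.not_infinite] at hdiff
      have h1 : (S ∩ U).Infinite := by
        by_contra hfin
        rw [Set.not_infinite] at hfin
        have := hfin.union hdiff
        rw [Set.inter_union_diff] at this
        exact hS this
      refine h1.mono ?_
      intro z hz
      exact ⟨hz.1, Set.disjoint_left.mp hUV hz.2⟩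
  choose xs hxsS Ws hWopen hxW hSinf using step
  let F : ℕ → {S : Set X // S.Infinite} := fun n =>
    Nat.rec ⟨Set.univ, Set.infinite_univ⟩
      (fun _ p => ⟨p.1 \ Ws p.1 p.2, hSinf p.1 p.2⟩) n
  let S : ℕ → Set X := fun n => (F n).1
  have hS : ∀ n, (S n).Infinite := fun n => (F n).2
  let x : ℕ → X := fun n => xs (S n) (hS n)
  let W : ℕ → Set X := fun n => Ws (S n) (hS n)
  have hsucc : ∀ n, S (n + 1) = S n \ W n := fun _ => rfl
  have hmono : ∀ m n, m ≤ n → S n ⊆ S m := by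
    intro m n h
    induction n, h using Nat.le_induction with
    | base => exact subset_rfl
    | succ n hmn ih => rw [hsucc]; exact Set.diff_subset.trans ih
  have hxS : ∀ n, x n ∈ S n := fun n => hxsS _ _
  have hxWk : ∀ n, x n ∈ W n := fun n => hxW _ _
  have hnotin : ∀ m n, m < n → x n ∉ W m := by
    intro m n h
    have h2 : S n ⊆ S (m + 1) := hmono _ _ h
    have h3 := h2 (hxS n)
    rw [hsucc] at h3
    exact h3.2
  have hne : ∀ m n, m < n → x m ≠ x n := by
    intro m n h heq
    exact hnotin m n h (heq ▸ hxWk m)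
  have hinj : Function.Injective x := by
    intro m n h
    rcases lt_trichotomy m n with h' | h' | h'
    · exact absurd h (hne m n h')
    · exact h'
    · exact absurd h.symm (hne n m h')
  refine ⟨Set.range x, Set.infinite_range_of_injective hinj, ?_⟩
  rw [discreteTopology_iff_isOpen_singleton]
  rintro ⟨_, n, rfl⟩
  rw [isOpen_induced_iff]
  refine ⟨W n \ (x '' {k | k < n}), ?_, ?_⟩
  · exact (hWopen _ _).sdiff (((Set.finite_lt_nat n).image x).isClosed)
  · ext ⟨z, m, rfl⟩
    simp only [Set.mem_preimage, Set.mem_singleton_iff, Set.mem_diff, Set.mem_image,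
      Set.mem_setOf_eq, Subtype.mk.injEq]
    constructor
    · rintro ⟨hzW, hznot⟩
      have h1 : ¬ n < m := fun hlt => hnotin n m hlt hzW
      have h2 : ¬ m < n := fun hlt => hznot ⟨m, hlt, rfl⟩
      have : m = n := le_antisymm (not_lt.1 h1) (not_lt.1 h2)
      rw [this]
    · intro hz
      have hmn : m = n := hinj (congrArg Subtype.val hz)
      subst hmn
      refine ⟨hxWk m, ?_⟩
      rintro ⟨k, hk, hkm⟩
      exact hne k m hk hkm

end Aux18

/-- if `Y` is an infinite discrete subspace of `X`, then
`2^(2^|Y|) ≤ |𝒰_X|`; in particular `2^𝔠 ≤ |𝒰_X|` for every infinite Tychonoff `X`. -/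
theorem stmt18 (X : Type u) [TopologicalSpace X] [T2Space X] [CompletelyRegularSpace X]
    [Infinite X] :
    (∀ Y : Set X, Y.Infinite → DiscreteTopology Y →
        (2 : Cardinal.{u}) ^ ((2 : Cardinal.{u}) ^ Cardinal.mk ↥Y) ≤ Cardinal.mk ↥(UX X)) ∧
      (2 : Cardinal.{u}) ^ Cardinal.continuum ≤ Cardinal.mk ↥(UX X) := by
  have main : ∀ Y : Set X, Y.Infinite → DiscreteTopology Y →
      (2 : Cardinal.{u}) ^ ((2 : Cardinal.{u}) ^ Cardinal.mk ↥Y) ≤ Cardinal.mk ↥(UX X) :=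
    fun Y hY hd => key18 Y hY hd
  refine ⟨main, ?_⟩
  obtain ⟨Y, hY, hd⟩ := exists_infinite_discrete X
  have h1 := main Y hY hd
  have h2 : Cardinal.continuum ≤ (2 : Cardinal.{u}) ^ Cardinal.mk ↥Y := by
    rw [← Cardinal.two_power_aleph0]
    exact Cardinal.power_le_power_left two_ne_zero
      (by haveI := hY.to_subtype; exact Cardinal.aleph0_le_mk ↥Y)
  exact (Cardinal.power_le_power_left two_ne_zero h2).trans h1
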